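/- For t ≥ 2 and 0 ≤ w ≤ μ_R(t)-2 where μ_R(t) := 2 - t² + t√((t-1)(t+2)), the quantity c₂(t,w) := -(5t+1)w² - 2t²(t-7)w + t²(t-4)² is nonnegative. -/
import Mathlib


/-- `μ_R(t) = 2 - t² + t√((t-1)(t+2))`. -/
noncomputable def muR (t : ℝ) : ℝ := 2 - t^2 + t * Real.sqrt ((t-1)*(t+2))

/-- `c₂(t,w) = -(5t+1)w² - 2t²(t-7)w + t²(t-4)²`. -/
def c2 (t w : ℝ) : ℝ := -(5*t+1)*w^2 - 2*t^2*(t-7)*w + t^2*(t-4)^2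

theorem c2_nonneg (t w : ℝ) (ht : 2 ≤ t) (hw0 : 0 ≤ w) (hw1 : w ≤ muR t - 2) :
    0 ≤ c2 t w := by
  set s := Real.sqrt ((t-1)*(t+2)) with hs
  have hs0 : 0 ≤ s := Real.sqrt_nonneg _
  have hs2 : s^2 = t^2 + t - 2 := by
    rw [hs, Real.sq_sqrt (by nlinarith : (0:ℝ) ≤ (t-1)*(t+2))]
    ring
  set W : ℝ := t*s - t^2 with hWdef
  have hWmu : muR t - 2 = W := by simp [muR, hWdef]; ring
  rw [hWmu] at hw1
  -- key inequality : 8*t^2+4*t-9 ≤ 8*t*s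
  have h8 : 8*t^2 + 4*t - 9 ≤ 8*t*s := by
    nlinarith [hs2, mul_nonneg (by linarith : (0:ℝ) ≤ t) hs0, sq_nonneg (8*t*s + 8*t^2+4*t-9)]
  -- value at endpoint W
  have hcW : c2 t W = t^2*(t+2)*(8*t*s - (8*t^2+4*t-9)) := by
    simp only [c2, hWdef]
    linear_combination (-(5*t+1)*t^2) * hs2
  have hcW0 : 0 ≤ c2 t W := by
    rw [hcW]
    apply mul_nonneg
    · nlinarith
    · linarith
  have hc0 : 0 ≤ c2 t 0 := by
    simp [c2]
    positivity
  rcases eq_or_lt_of_le hw0 with h | h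
  · rw [← h]; exact hc0
  · have hWpos : 0 < W := lt_of_lt_of_le h hw1
    have hid : W * c2 t w = (W - w) * c2 t 0 + w * c2 t W + (5*t+1)*w*(W-w)*W := by
      simp only [c2]; ring
    have h5 : (0:ℝ) ≤ 5*t+1 := by linarith
    have : 0 ≤ W * c2 t w := by
      rw [hid]
      have := mul_nonneg (mul_nonneg (mul_nonneg h5 hw0) (by linarith : (0:ℝ) ≤ W - w)) hWpos.le
      nlinarith [mul_nonneg (by linarith : (0:ℝ) ≤ W - w) hc0, mul_nonneg hw0 hcW0]
    nlinarith [this]
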